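/- If kⁿ ∈ (0,1) with kⁿ → 1 and pⁿ ∈ (0, K(kⁿ)) with pⁿ → +∞, then the Jacobi amplitude satisfies am(pⁿ, kⁿ) → π/2. -/

import Mathlib

open Filter intervalIntegral

/-- The incomplete elliptic integral of the first kind
`F(u,k) = ∫₀ᵘ dt/√(1 − k² sin² t)`. -/
noncomputable def ellF (u k : ℝ) : ℝ :=
  ∫ t in (0:ℝ)..u, 1 / Real.sqrt (1 - k ^ 2 * Real.sin t ^ 2)

/- Since `1 - k² sin² t ≥ cos² t` for `|k| ≤ 1`, the integrand of `F(u, k)` is at most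
`1 / cos t ≤ 1 / cos u` on `[0, u]`, so `F(u, k) ≤ u / cos u` uniformly in `k`. Hence
`cos uₙ ≤ (π/2) / pₙ → 0`, and `uₙ = arccos (cos uₙ) → arccos 0 = π/2`. -/

open Real Set

lemma cos_sq_le_one_sub_sq_mul_sin_sq {k : ℝ} (hk : |k| ≤ 1) (t : ℝ) :
    cos t ^ 2 ≤ 1 - k ^ 2 * sin t ^ 2 := by
  have hk2 : k ^ 2 ≤ 1 := sq_le_one_iff_abs_le_one k |>.mpr hk
  nlinarith [sin_sq_add_cos_sq t, sq_nonneg (sin t)]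

lemma cos_le_sqrt_one_sub_sq_mul_sin_sq {k t : ℝ} (hk : |k| ≤ 1) (ht : 0 ≤ cos t) :
    cos t ≤ √(1 - k ^ 2 * sin t ^ 2) :=
  calc cos t = √(cos t ^ 2) := (sqrt_sq ht).symm
    _ ≤ _ := sqrt_le_sqrt (cos_sq_le_one_sub_sq_mul_sin_sq hk t)

lemma ellF_le_div_cos {u k : ℝ} (hk : |k| ≤ 1) (hu₀ : 0 ≤ u) (hu : u < π / 2) :
    ellF u k ≤ u / cos u := by
  have hcos_pos : ∀ t ∈ Icc 0 u, 0 < cos t := fun t ht =>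
    cos_pos_of_mem_Ioo ⟨by linarith [pi_pos, ht.1], by linarith [ht.2]⟩
  have hcos_le : ∀ t ∈ Icc 0 u, cos u ≤ √(1 - k ^ 2 * sin t ^ 2) := fun t ht =>
    (cos_le_cos_of_nonneg_of_le_pi ht.1 (by linarith [pi_pos]) ht.2).trans
      (cos_le_sqrt_one_sub_sq_mul_sin_sq hk (hcos_pos t ht).le)
  have hu_mem : u ∈ Icc 0 u := ⟨hu₀, le_rfl⟩
  have hint :
      IntervalIntegrable (fun t => 1 / √(1 - k ^ 2 * sin t ^ 2)) MeasureTheory.volume 0 u := by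
    refine ContinuousOn.intervalIntegrable ?_
    rw [uIcc_of_le hu₀]
    refine continuousOn_const.div (by fun_prop) fun t ht => ?_
    exact ((hcos_pos u hu_mem).trans_le (hcos_le t ht)).ne'
  calc ellF u k ≤ ∫ _ in (0:ℝ)..u, 1 / cos u :=
        integral_mono_on hu₀ hint intervalIntegrable_const fun t ht =>
          one_div_le_one_div_of_le (hcos_pos u hu_mem) (hcos_le t ht)
    _ = u / cos u := by rw [integral_const, smul_eq_mul, sub_zero, mul_one_div]

theorem amplitude_tendsto_pi_div_two
    (kn pn un : ℕ → ℝ)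
    (hkn : ∀ n, kn n ∈ Set.Ioo (0:ℝ) 1)
    (hpninf : Tendsto pn atTop atTop)
    (hun : ∀ n, un n ∈ Set.Ioo (0:ℝ) (Real.pi / 2))
    (ham : ∀ n, ellF (un n) (kn n) = pn n) :
    Tendsto un atTop (nhds (Real.pi / 2)) := by
  have hcos_pos : ∀ n, 0 < cos (un n) := fun n =>
    cos_pos_of_mem_Ioo ⟨by linarith [pi_pos, (hun n).1], (hun n).2⟩
  have hcos_le : ∀ᶠ n in atTop, cos (un n) ≤ π / 2 / pn n := by
    filter_upwards [hpninf.eventually_gt_atTop 0] with n hpn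
    have hk : |kn n| ≤ 1 := abs_le.mpr ⟨by linarith [(hkn n).1], (hkn n).2.le⟩
    have hp : pn n ≤ un n / cos (un n) := ham n ▸ ellF_le_div_cos hk (hun n).1.le (hun n).2
    rw [le_div_iff₀ hpn]
    rw [le_div_iff₀ (hcos_pos n)] at hp
    nlinarith [(hun n).2]
  have hcos_tendsto : Tendsto (fun n => cos (un n)) atTop (nhds 0) :=
    tendsto_of_tendsto_of_tendsto_of_le_of_le' tendsto_const_nhds
      (tendsto_const_nhds.div_atTop hpninf) (Eventually.of_forall fun n => (hcos_pos n).le)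
      hcos_le
  have harccos : ∀ n, arccos (cos (un n)) = un n := fun n =>
    arccos_cos (hun n).1.le (by linarith [pi_pos, (hun n).2])
  simpa only [Function.comp_def, harccos, arccos_zero] using
    (continuous_arccos.tendsto 0).comp hcos_tendsto
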